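/- arXiv:1504.00274 — 2 statements merged into one kernel-verified Lean document; each statement's English description precedes it below -/
import Mathlib

section
/- Let f be a complex polynomial of degree n ≥ 2 all of whose roots lie on a vertical line of the complex plane, i.e. there exists a ∈ ℝ such that every root of f has real part a. Then f is trivial, i.e. of the form c(X - b)^n, if and only if the (n-2)nd derivative f^{(n-2)} has a double root, i.e. there exists z with f^{(n-2)}(z) = 0 and f^{(n-1)}(z) = 0. -/
/-!
Shift the candidate double root `z` to the origin: for `g = f(X + z)` one has
`f⁽ᵏ⁾(z) = k! · [Xᵏ] g`, so `z` is a double root of `f⁽ⁿ⁻²⁾` exactly when the coefficients of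
`Xⁿ⁻¹` and `Xⁿ⁻²` in `g` vanish. By Vieta the roots `sᵢ` of `g` then satisfy `∑ sᵢ = 0` and
`∑_{i<j} sᵢ sⱼ = 0`, hence `∑ sᵢ² = 0`. The `sᵢ` share one real part, which is `0` because their
sum is; then `∑ sᵢ² = -∑ (Im sᵢ)²` forces every `sᵢ = 0`, i.e. `g = c Xⁿ`.
-/

open Polynomial

namespace Multiset

variable {R : Type*} [CommSemiring R]

theorem esymm_one_eq_sum (s : Multiset R) : s.esymm 1 = s.sum := by
  simp [esymm, powersetCard_one]

theorem esymm_cons_succ (a : R) (s : Multiset R) (k : ℕ) :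
    (a ::ₘ s).esymm (k + 1) = s.esymm (k + 1) + a * s.esymm k := by
  simp only [esymm, powersetCard_cons, map_add, sum_add, map_map, Function.comp_def, prod_cons,
    sum_map_mul_left]

theorem sq_sum_eq_sum_map_sq_add_two_mul_esymm_two (s : Multiset R) :
    s.sum ^ 2 = (s.map (· ^ 2)).sum + 2 * s.esymm 2 := by
  induction s using Multiset.induction with
  | empty => simp [esymm, powersetCard_zero_right]
  | cons a s ih =>
    rw [sum_cons, esymm_cons_succ, esymm_one_eq_sum, map_cons, sum_cons, add_sq, ih]
    ring

end Multiset

namespace Polynomial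

theorem iterate_derivative_eval_eq_factorial_mul_coeff_taylor {R : Type*} [CommSemiring R]
    (f : R[X]) (k : ℕ) (z : R) :
    (derivative^[k] f).eval z = k.factorial * (taylor z f).coeff k := by
  rw [taylor_coeff, ← factorial_smul_hasseDeriv]
  simp [nsmul_eq_mul]

theorem taylor_C_mul_X_sub_C_pow {R : Type*} [CommRing R] (c z : R) (n : ℕ) :
    taylor z (C c * (X - C z) ^ n) = C c * X ^ n := by
  simp [taylor_mul, taylor_pow, taylor_C, taylor_X]

variable {R : Type*} [CommRing R] [IsDomain R] {g : R[X]}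

theorem esymm_roots_eq_zero_of_coeff_eq_zero (hg : g ≠ 0)
    (hroots : Multiset.card g.roots = g.natDegree) {k : ℕ} (hk : k ≤ g.natDegree)
    (hcoeff : g.coeff (g.natDegree - k) = 0) : g.roots.esymm k = 0 := by
  rw [coeff_eq_esymm_roots_of_card hroots (Nat.sub_le _ _), Nat.sub_sub_self hk] at hcoeff
  simpa [leadingCoeff_ne_zero.mpr hg] using hcoeff

theorem eq_C_leadingCoeff_mul_X_pow_of_forall_mem_roots_eq_zero
    (hroots : Multiset.card g.roots = g.natDegree) (hzero : ∀ x ∈ g.roots, x = 0) :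
    g = C g.leadingCoeff * X ^ g.natDegree := by
  conv_lhs => rw [← C_leadingCoeff_mul_prod_multiset_X_sub_C hroots,
    Multiset.eq_replicate.mpr ⟨hroots, hzero⟩]
  simp

end Polynomial

theorem Complex.forall_mem_eq_zero_of_re_eq_of_sum_eq_zero_of_sum_sq_eq_zero
    {s : Multiset ℂ} {a : ℝ} (hre : ∀ x ∈ s, x.re = a) (hsum : s.sum = 0)
    (hsq : (s.map (· ^ 2)).sum = 0) : ∀ x ∈ s, x = 0 := by
  have re_sum (t : Multiset ℂ) : t.sum.re = (t.map Complex.re).sum :=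
    map_multiset_sum Complex.reAddGroupHom t
  intro x hx
  have ha : a = 0 := by
    have h := congrArg Complex.re hsum
    rw [re_sum, Multiset.map_congr rfl hre] at h
    simpa [show s ≠ 0 by rintro rfl; simp at hx] using h
  have him_sq : (s.map fun y => y.im ^ 2).sum = 0 := by
    have h := congrArg Complex.re hsq
    rw [re_sum, Multiset.map_map, Complex.zero_re] at h
    rw [← neg_eq_zero, ← Multiset.sum_map_neg, ← h]
    refine congrArg _ (Multiset.map_congr rfl fun y hy => ?_)
    simp [sq, hre y hy, ha]
  have him : x.im ^ 2 = 0 :=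
    Multiset.all_zero_of_le_zero_le_of_sum_eq_zero (fun _ hy => by
      obtain ⟨y, -, rfl⟩ := Multiset.mem_map.mp hy; positivity) him_sq _
      (Multiset.mem_map_of_mem _ hx)
  exact Complex.ext (by simp [hre x hx, ha]) (by simpa using him)

theorem stmt9 (n : ℕ) (hn : 2 ≤ n) (f : Polynomial ℂ) (hdeg : f.natDegree = n)
    (hline : ∃ a : ℝ, ∀ z : ℂ, f.eval z = 0 → z.re = a) :
    (∃ c b : ℂ, f = Polynomial.C c * (Polynomial.X - Polynomial.C b) ^ n) ↔
      (∃ z : ℂ, (Polynomial.derivative^[n - 2] f).eval z = 0 ∧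
        (Polynomial.derivative^[n - 1] f).eval z = 0) := by
  simp only [iterate_derivative_eval_eq_factorial_mul_coeff_taylor, mul_eq_zero,
    Nat.cast_eq_zero, Nat.factorial_ne_zero, false_or]
  constructor
  · rintro ⟨c, b, rfl⟩
    refine ⟨b, ?_, ?_⟩ <;> rw [taylor_C_mul_X_sub_C_pow, coeff_C_mul_X_pow, if_neg (by omega)]
  · rintro ⟨z, h2, h1⟩
    obtain ⟨a, ha⟩ := hline
    set g := taylor z f
    have hg : g ≠ 0 := by rw [Ne, taylor_eq_zero]; rintro rfl; simp at hdeg; omega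
    have hgdeg : g.natDegree = n := by rw [natDegree_taylor, hdeg]
    have hroots : Multiset.card g.roots = g.natDegree :=
      splits_iff_card_roots.mp (IsAlgClosed.splits g)
    have hsum : g.roots.sum = 0 := by
      rw [← Multiset.esymm_one_eq_sum]
      exact esymm_roots_eq_zero_of_coeff_eq_zero hg hroots (by omega) (by rwa [hgdeg])
    have hesymm : g.roots.esymm 2 = 0 :=
      esymm_roots_eq_zero_of_coeff_eq_zero hg hroots (by omega) (by rwa [hgdeg])
    have hsq : (g.roots.map (· ^ 2)).sum = 0 := by
      linear_combination -(Multiset.sq_sum_eq_sum_map_sq_add_two_mul_esymm_two g.roots)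
        + g.roots.sum * hsum - 2 * hesymm
    have hre : ∀ x ∈ g.roots, x.re = a - z.re := fun x hx => by
      have hshifted := ha (x + z) (by rw [← taylor_eval]; exact (mem_roots hg).mp hx)
      simp [← hshifted]
    have hzero :=
      Complex.forall_mem_eq_zero_of_re_eq_of_sum_eq_zero_of_sum_sq_eq_zero hre hsum hsq
    refine ⟨f.leadingCoeff, z, taylor_injective z ?_⟩
    rw [taylor_C_mul_X_sub_C_pow, ← leadingCoeff_taylor, ← hdeg, ← natDegree_taylor f z]
    exact eq_C_leadingCoeff_mul_X_pow_of_forall_mem_roots_eq_zero hroots hzero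
end

section
/- Let f be a monic complex polynomial of degree n ≥ 2 with distinct roots λ_1, ..., λ_k, let z_{n-1} be the unique root of f^{(n-1)}, let z_{n-2} be any root of the quadratic polynomial f^{(n-2)}, and let g = f' / gcd(f, f'). Then the sum of the squares of the roots of g counted with multiplicity equals Σ_{j=1}^{k} λ_j^2 - 2(n-1)(z_{n-1} - z_{n-2})^2 - z_{n-1}^2. -/
/-!
Let `e₁, e₂` be the first two elementary symmetric functions of the roots of `f`. By Vieta the
sum of squares of the roots of `f` is `e₁² - 2 e₂`, and that of the roots of `f'` follows from
the coefficients `k f_k` of `X f'`. The quadratic `f^{(n-2)}` has coefficients proportional to `1, e₁, e₂`, which gives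
`n z₁ = e₁` and expresses `(z₁ - z₂)²` through `e₁, e₂`. Since `gcd(f, f')` has the root `λ_j`
with multiplicity `r_j - 1`, the roots of `g` are those of `f'`, minus those of `f`, plus each
distinct `λ_j` once; what remains is an identity between polynomials in `e₁, e₂, z₁, z₂`.
-/

open Polynomial
open scoped Nat

namespace Multiset

theorem esymm_one {R : Type*} [CommSemiring R] (s : Multiset R) : s.esymm 1 = s.sum := by
  simp [esymm, powersetCard_one]

theorem esymm_two_cons {R : Type*} [CommSemiring R] (a : R) (s : Multiset R) :
    (a ::ₘ s).esymm 2 = s.esymm 2 + a * s.sum := by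
  simp [esymm, powersetCard_cons, powersetCard_one, map_map]
  exact congrArg _ (by simpa using sum_map_mul_left (a := a) (s := s) (f := id))

theorem sum_map_sq {R : Type*} [CommRing R] (s : Multiset R) :
    (s.map (· ^ 2)).sum = s.sum ^ 2 - 2 * s.esymm 2 := by
  induction s using Multiset.induction_on with
  | empty => simp [esymm, powersetCard_zero_right]
  | cons a s ih =>
    rw [map_cons, sum_cons, ih, esymm_two_cons, sum_cons]
    ring

end Multiset

namespace Polynomial

theorem Splits.coeff_sq_mul_sum_map_sq_roots {F : Type*} [Field F] {p : F[X]} (hp : p.Splits)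
    {d : ℕ} (hd : p.natDegree = d + 2) :
    p.coeff (d + 2) ^ 2 * (p.roots.map (· ^ 2)).sum =
      p.coeff (d + 1) ^ 2 - 2 * p.coeff (d + 2) * p.coeff d := by
  have vieta (k j : ℕ) (hk : k + j = d + 2) :
      p.coeff k = p.coeff (d + 2) * (-1) ^ j * p.roots.esymm j := by
    rw [coeff_eq_esymm_roots_of_splits hp (by omega), leadingCoeff, hd,
      show d + 2 - k = j by omega]
  rw [vieta (d + 1) 1 rfl, vieta d 2 rfl, Multiset.sum_map_sq, Multiset.esymm_one]
  ring

theorem coeff_X_mul_derivative {R : Type*} [Semiring R] (p : R[X]) (k : ℕ) :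
    (X * derivative p).coeff k = k * p.coeff k := by
  cases k with
  | zero => simp
  | succ k => simpa [coeff_X_mul, coeff_derivative] using (Nat.cast_commute (k + 1) _).symm.eq

theorem factorial_mul_coeff_iterate_derivative {R : Type*} [Semiring R] (p : R[X]) (m j : ℕ) :
    (j ! : R) * (derivative^[m] p).coeff j = (j + m)! * p.coeff (j + m) := by
  rw [coeff_iterate_derivative, nsmul_eq_mul, ← mul_assoc, ← Nat.cast_mul,
    ← Nat.factorial_mul_descFactorial (by omega : m ≤ j + m), Nat.add_sub_cancel]

theorem eval_of_natDegree_le_two {R : Type*} [CommRing R] {q : R[X]} (hq : q.natDegree ≤ 2)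
    (z : R) :
    q.eval z = q.coeff 2 * z ^ 2 + q.coeff 1 * z + q.coeff 0 := by
  rw [eval_eq_sum_range' (by omega : q.natDegree < 3)]
  simp [Finset.sum_range_succ]
  ring

theorem eval_derivative_of_natDegree_le_two {R : Type*} [CommRing R] {q : R[X]}
    (hq : q.natDegree ≤ 2) (z : R) :
    (derivative q).eval z = 2 * q.coeff 2 * z + q.coeff 1 := by
  have hq' : (derivative q).natDegree < 2 := by have := natDegree_derivative_le q; omega
  rw [eval_eq_sum_range' hq']
  simp [Finset.sum_range_succ, coeff_derivative]
  ring

section IterateDerivative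

variable {R : Type*} [CommRing R] {p : R[X]} {m : ℕ}

theorem natDegree_iterate_derivative_le_two (hp : p.natDegree ≤ m + 2) :
    (derivative^[m] p).natDegree ≤ 2 :=
  (natDegree_iterate_derivative p m).trans (by omega)

theorem two_mul_eval_iterate_derivative (hp : p.natDegree ≤ m + 2) (z : R) :
    2 * (derivative^[m] p).eval z = m ! * ((m + 2) * (m + 1) * p.coeff (m + 2) * z ^ 2 +
      2 * (m + 1) * p.coeff (m + 1) * z + 2 * p.coeff m) := by
  have c0 := factorial_mul_coeff_iterate_derivative p m 0
  have c1 := factorial_mul_coeff_iterate_derivative p m 1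
  have c2 := factorial_mul_coeff_iterate_derivative p m 2
  simp only [Nat.factorial, add_comm _ m] at c0 c1 c2
  push_cast at c0 c1 c2
  rw [eval_of_natDegree_le_two (natDegree_iterate_derivative_le_two hp)]
  linear_combination z ^ 2 * c2 + 2 * z * c1 + 2 * c0

theorem eval_iterate_derivative_succ (hp : p.natDegree ≤ m + 2) (z : R) :
    (derivative^[m + 1] p).eval z =
      (m + 1)! * ((m + 2) * p.coeff (m + 2) * z + p.coeff (m + 1)) := by
  have c1 := factorial_mul_coeff_iterate_derivative p m 1
  have c2 := factorial_mul_coeff_iterate_derivative p m 2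
  simp only [Nat.factorial, add_comm _ m] at c1 c2
  push_cast at c1 c2
  rw [Function.iterate_succ_apply',
    eval_derivative_of_natDegree_le_two (natDegree_iterate_derivative_le_two hp),
    Nat.factorial_succ]
  push_cast
  linear_combination z * c2 + c1

end IterateDerivative

variable {F : Type*} [Field F] [CharZero F]

/-- `X * f'` has the roots of `f'` together with `0`, and its `k`-th coefficient is `k` times
that of `f`; passing to it avoids any bookkeeping with the degree of `f'`. -/
theorem Monic.sum_map_sq_roots_derivative [IsAlgClosed F] {f : F[X]} (hf : f.Monic) {m : ℕ}
    (hdeg : f.natDegree = m + 2) :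
    ((m : F) + 2) ^ 2 * ((derivative f).roots.map (· ^ 2)).sum =
      ((m + 1) * f.coeff (m + 1)) ^ 2 - 2 * (m + 2) * (m * f.coeff m) := by
  have hcoeff := coeff_X_mul_derivative f
  have hlead : f.coeff (m + 2) = 1 := hdeg ▸ hf.coeff_natDegree
  have hdeg' : (X * derivative f).natDegree = m + 2 := by
    refine natDegree_eq_of_le_of_coeff_ne_zero ?_ (by simp [hcoeff, hlead]; norm_cast)
    refine natDegree_le_iff_coeff_eq_zero.mpr fun k hk => ?_
    rw [hcoeff, coeff_eq_zero_of_natDegree_lt (hdeg ▸ hk), mul_zero]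
  have hne : X * derivative f ≠ 0 := fun h => by simp [h] at hdeg'
  have hroots : (X * derivative f).roots = 0 ::ₘ (derivative f).roots := by
    rw [roots_mul hne, roots_X, Multiset.singleton_add]
  have := (IsAlgClosed.splits (X * derivative f)).coeff_sq_mul_sum_map_sq_roots hdeg'
  rw [hroots, Multiset.map_cons, Multiset.sum_cons, hcoeff, hcoeff, hcoeff, hlead] at this
  push_cast at this
  linear_combination this

section Gcd

variable [DecidableEq F] [DecidableEq F[X]]

theorem rootMultiplicity_gcd_derivative {f : F[X]} (hf' : derivative f ≠ 0) (t : F) :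
    (EuclideanDomain.gcd f (derivative f)).rootMultiplicity t = f.rootMultiplicity t - 1 := by
  have hf : f ≠ 0 := by rintro rfl; exact hf' derivative_zero
  have hd : EuclideanDomain.gcd f (derivative f) ≠ 0 :=
    fun h => hf (EuclideanDomain.gcd_eq_zero_iff.mp h).1
  by_cases ht : f.IsRoot t
  · rw [← derivative_rootMultiplicity_of_root ht]
    refine le_antisymm (rootMultiplicity_le_rootMultiplicity_of_dvd hf'
      (EuclideanDomain.gcd_dvd_right _ _) t) ?_
    rw [le_rootMultiplicity_iff hd]
    refine EuclideanDomain.dvd_gcd ?_ (pow_rootMultiplicity_dvd _ t)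
    rw [derivative_rootMultiplicity_of_root ht]
    exact (pow_dvd_pow _ (Nat.sub_le _ _)).trans (pow_rootMultiplicity_dvd f t)
  · rw [rootMultiplicity_eq_zero ht]
    exact Nat.le_zero.mp ((rootMultiplicity_le_rootMultiplicity_of_dvd hf
      (EuclideanDomain.gcd_dvd_left _ _) t).trans (rootMultiplicity_eq_zero ht).le)

theorem roots_gcd_derivative {f : F[X]} (hf' : derivative f ≠ 0) :
    (EuclideanDomain.gcd f (derivative f)).roots = f.roots - f.roots.dedup := by
  have hf : f ≠ 0 := by rintro rfl; exact hf' derivative_zero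
  ext t
  rw [Multiset.count_sub, count_roots, count_roots, Multiset.count_dedup,
    rootMultiplicity_gcd_derivative hf']
  split_ifs with ht
  · rfl
  · rw [rootMultiplicity_eq_zero (by rwa [mem_roots hf] at ht)]

theorem roots_derivative_eq_add {f : F[X]} (hf' : derivative f ≠ 0) :
    (derivative f).roots =
      (f.roots - f.roots.dedup) + (derivative f / EuclideanDomain.gcd f (derivative f)).roots := by
  have hf : f ≠ 0 := by rintro rfl; exact hf' derivative_zero
  have hmul := EuclideanDomain.mul_div_cancel'
    (fun h => hf (EuclideanDomain.gcd_eq_zero_iff.mp h).1)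
    (EuclideanDomain.gcd_dvd_right f (derivative f))
  rw [← roots_gcd_derivative hf', ← roots_mul (hmul.symm ▸ hf'), hmul]

theorem sum_map_roots_derivative_div_gcd {M : Type*} [AddCommGroup M] (g : F → M) {f : F[X]}
    (hf' : derivative f ≠ 0) :
    ((derivative f / EuclideanDomain.gcd f (derivative f)).roots.map g).sum =
      ((derivative f).roots.map g).sum - (f.roots.map g).sum + (f.roots.dedup.map g).sum := by
  have hsplit : (f.roots.map g).sum =
      (f.roots.dedup.map g).sum + ((f.roots - f.roots.dedup).map g).sum := by
    rw [← Multiset.sum_add, ← Multiset.map_add, add_tsub_cancel_of_le f.roots.dedup_le]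
  rw [roots_derivative_eq_add hf', Multiset.map_add, Multiset.sum_add, hsplit]
  abel

end Gcd

end Polynomial

theorem stmt16 (n : ℕ) (hn : 2 ≤ n) (f : Polynomial ℂ) (hf : f.Monic)
    (hdeg : f.natDegree = n) (z₁ z₂ : ℂ)
    (hz₁ : (Polynomial.derivative^[n - 1] f).eval z₁ = 0)
    (hz₂ : (Polynomial.derivative^[n - 2] f).eval z₂ = 0) :
    (((Polynomial.derivative f / EuclideanDomain.gcd f (Polynomial.derivative f)).roots).map
        (fun x => x ^ 2)).sum =
      ∑ x ∈ f.roots.toFinset, x ^ 2 - 2 * ((n : ℂ) - 1) * (z₁ - z₂) ^ 2 - z₁ ^ 2 := by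
  obtain ⟨m, rfl⟩ : ∃ m, n = m + 2 := ⟨n - 2, by omega⟩
  have hlead : f.coeff (m + 2) = 1 := hdeg ▸ hf.coeff_natDegree
  have hcentroid : (m + 2) * z₁ + f.coeff (m + 1) = 0 := by
    rw [show m + 2 - 1 = m + 1 by omega, eval_iterate_derivative_succ hdeg.le, hlead] at hz₁
    simpa [Nat.factorial_ne_zero] using hz₁
  have hquadratic :
      (m + 2) * (m + 1) * z₂ ^ 2 + 2 * (m + 1) * f.coeff (m + 1) * z₂ + 2 * f.coeff m = 0 := by
    have := two_mul_eval_iterate_derivative hdeg.le z₂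
    rw [show m + 2 - 2 = m by omega] at hz₂
    rw [hz₂, hlead] at this
    simpa [Nat.factorial_ne_zero] using this.symm
  have hf' : derivative f ≠ 0 := derivative_ne_zero.mpr (by omega)
  have hsq := (IsAlgClosed.splits f).coeff_sq_mul_sum_map_sq_roots hdeg
  have hsq' := hf.sum_map_sq_roots_derivative hdeg
  rw [hlead] at hsq
  rw [sum_map_roots_derivative_div_gcd _ hf', Finset.sum, Multiset.toFinset_val]
  push_cast
  apply mul_left_cancel₀ (pow_ne_zero 2 (by norm_cast : ((m : ℂ) + 2) ≠ 0))
  linear_combination hsq' - (m + 2) ^ 2 * hsq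
    + ((1 - 2 * (m + 2)) * (f.coeff (m + 1) - (m + 2) * z₁) - 4 * (m + 2) * (m + 1) * z₂)
      * hcentroid
    + 2 * (m + 2) * hquadratic
end
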